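/- Let G be a finite nilpotent group, Φ(G) its Frattini subgroup, and f : L(G) → L(G) an ℰL-automorphism of G. Then f(Φ(G)) = Φ(G). -/

import Mathlib

/-- An ℰL-isomorphism from a group `G₁` to a group `G₂`: a bijection between the subgroup
lattices which commutes with taking normal cores and preserves the ℰ-lattice meet
`H ∧ K = H_G ∩ K_G` and join `H ∨ K = H_G K_G` (the join of the two normal cores). -/
def IsELIso {G₁ G₂ : Type*} [Group G₁] [Group G₂] (f : Subgroup G₁ → Subgroup G₂) : Prop :=
  Function.Bijective f ∧
    (∀ H : Subgroup G₁, f H.normalCore = (f H).normalCore) ∧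
    (∀ H K : Subgroup G₁,
      f (H.normalCore ⊓ K.normalCore) = (f H).normalCore ⊓ (f K).normalCore) ∧
    (∀ H K : Subgroup G₁,
      f (H.normalCore ⊔ K.normalCore) = (f H).normalCore ⊔ (f K).normalCore)

/-! An ℰL-isomorphism restricts to an order isomorphism between the lattices of normal
subgroups. In a finite nilpotent group every maximal subgroup is normal, so the maximal
subgroups are exactly the maximal normal subgroups; these are therefore permuted by an
ℰL-automorphism, which consequently fixes their intersection `Φ(G)`. -/

theorem le_frattini_iff {G : Type*} [Group G] {P : Subgroup G} :
    P ≤ frattini G ↔ ∀ M, IsCoatom M → P ≤ M :=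
  le_iInf₂_iff

namespace Subgroup

variable {G : Type*} [Group G]

def IsMaximalNormal (N : Subgroup G) : Prop :=
  N.Normal ∧ N ≠ ⊤ ∧ ∀ K : Subgroup G, K.Normal → N < K → K = ⊤

theorem isCoatom_iff_isMaximalNormal [IsCoatomic (Subgroup G)]
    (hnormal : ∀ M : Subgroup G, IsCoatom M → M.Normal) {N : Subgroup G} :
    IsCoatom N ↔ N.IsMaximalNormal := by
  refine ⟨fun hN => ⟨hnormal N hN, hN.1, fun K _ hNK => hN.2 K hNK⟩, ?_⟩
  rintro ⟨-, hne, hmax⟩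
  refine ⟨hne, fun K hNK => by_contra fun hK => ?_⟩
  obtain ⟨M, hM, hKM⟩ := (eq_top_or_exists_le_coatom K).resolve_left hK
  exact hM.1 (hmax M (hnormal M hM) (hNK.trans_le hKM))

end Subgroup

namespace IsELIso

open Subgroup

variable {G₁ G₂ : Type*} [Group G₁] [Group G₂] {f : Subgroup G₁ → Subgroup G₂}

theorem injective (hf : IsELIso f) : Function.Injective f := hf.1.1

theorem surjective (hf : IsELIso f) : Function.Surjective f := hf.1.2

theorem map_normalCore (hf : IsELIso f) (H : Subgroup G₁) : f H.normalCore = (f H).normalCore :=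
  hf.2.1 H

theorem normal_map_iff (hf : IsELIso f) {H : Subgroup G₁} : (f H).Normal ↔ H.Normal := by
  refine ⟨fun h => ?_, fun h => ?_⟩
  · have hcore : f H.normalCore = f H := by rw [hf.map_normalCore, normalCore_eq_self]
    rw [← hf.injective hcore]
    infer_instance
  · rw [← H.normalCore_eq_self, hf.map_normalCore]
    infer_instance

theorem map_inf (hf : IsELIso f) {H K : Subgroup G₁} (hH : H.Normal) (hK : K.Normal) :
    f (H ⊓ K) = f H ⊓ f K := by
  have := hf.normal_map_iff.2 hH
  have := hf.normal_map_iff.2 hK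
  simpa only [normalCore_eq_self] using hf.2.2.1 H K

theorem map_le_map_iff (hf : IsELIso f) {H K : Subgroup G₁} (hH : H.Normal) (hK : K.Normal) :
    f H ≤ f K ↔ H ≤ K := by
  rw [← inf_eq_left, ← hf.map_inf hH hK, hf.injective.eq_iff, inf_eq_left]

theorem map_lt_map_iff (hf : IsELIso f) {H K : Subgroup G₁} (hH : H.Normal) (hK : K.Normal) :
    f H < f K ↔ H < K := by
  simp only [lt_iff_le_not_ge, hf.map_le_map_iff hH hK, hf.map_le_map_iff hK hH]

theorem map_top (hf : IsELIso f) : f ⊤ = ⊤ := by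
  obtain ⟨H, hH⟩ := hf.surjective ⊤
  have hcore : f H.normalCore = ⊤ := by rw [hf.map_normalCore, hH, normalCore_eq_self]
  rw [← top_le_iff, ← hcore, hf.map_le_map_iff inferInstance inferInstance]
  exact le_top

theorem map_eq_top_iff (hf : IsELIso f) {H : Subgroup G₁} : f H = ⊤ ↔ H = ⊤ := by
  rw [← hf.map_top, hf.injective.eq_iff]

theorem isMaximalNormal_map_iff (hf : IsELIso f) {H : Subgroup G₁} :
    (f H).IsMaximalNormal ↔ H.IsMaximalNormal := by
  refine ⟨fun ⟨hfH, hne, hmax⟩ => ?_, fun ⟨hH, hne, hmax⟩ => ?_⟩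
  · have hH := hf.normal_map_iff.1 hfH
    refine ⟨hH, mt hf.map_eq_top_iff.2 hne, fun K hK hHK => ?_⟩
    exact hf.map_eq_top_iff.1 (hmax _ (hf.normal_map_iff.2 hK) ((hf.map_lt_map_iff hH hK).2 hHK))
  · refine ⟨hf.normal_map_iff.2 hH, mt hf.map_eq_top_iff.1 hne, fun K hK hHK => ?_⟩
    obtain ⟨L, rfl⟩ := hf.surjective K
    have hL := hf.normal_map_iff.1 hK
    exact hf.map_eq_top_iff.2 (hmax L hL ((hf.map_lt_map_iff hH hL).1 hHK))

theorem isCoatom_map_iff (hf : IsELIso f) [IsCoatomic (Subgroup G₁)] [IsCoatomic (Subgroup G₂)]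
    (hnormal₁ : ∀ M : Subgroup G₁, IsCoatom M → M.Normal)
    (hnormal₂ : ∀ M : Subgroup G₂, IsCoatom M → M.Normal) {H : Subgroup G₁} :
    IsCoatom (f H) ↔ IsCoatom H := by
  rw [isCoatom_iff_isMaximalNormal hnormal₁, isCoatom_iff_isMaximalNormal hnormal₂,
    hf.isMaximalNormal_map_iff]

theorem map_frattini (hf : IsELIso f) (hcoatom : ∀ H, IsCoatom (f H) ↔ IsCoatom H)
    (hnormal : ∀ M : Subgroup G₁, IsCoatom M → M.Normal) :
    f (frattini G₁) = frattini G₂ := by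
  apply le_antisymm
  · refine le_frattini_iff.2 fun M hM => ?_
    obtain ⟨N, rfl⟩ := hf.surjective M
    have hN := (hcoatom N).1 hM
    exact (hf.map_le_map_iff inferInstance (hnormal N hN)).2 (frattini_le_coatom hN)
  · obtain ⟨P, hP⟩ := hf.surjective (frattini G₂)
    have hPn : P.Normal := hf.normal_map_iff.1 (hP ▸ inferInstance)
    rw [← hP, hf.map_le_map_iff hPn inferInstance, le_frattini_iff]
    intro M hM
    rw [← hf.map_le_map_iff hPn (hnormal M hM), hP]
    exact frattini_le_coatom ((hcoatom M).2 hM)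

end IsELIso

/-- Corollary (2.2): if `G` is a finite nilpotent group and `f` is an ℰL-automorphism of
`G`, then the Frattini subgroup `Φ(G)` is a fixed point of `f`. -/
theorem eliso_fixes_frattini {G : Type*} [Group G] [Finite G] [Group.IsNilpotent G]
    (f : Subgroup G → Subgroup G) (hf : IsELIso f) :
    f (frattini G) = frattini G := by
  have hnormal : ∀ M : Subgroup G, IsCoatom M → M.Normal :=
    ((Group.isNilpotent_of_finite_tfae (G := G)).out 0 2).1 ‹_›
  exact hf.map_frattini (fun _ => hf.isCoatom_map_iff hnormal hnormal) hnormal
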